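/- If the cost function c is invariant under every permutation of the models fixing S setwise (i.e., c depends only on the cardinality of its argument, c(Y) = g(|Y|) for some g : ℕ → ℝ), then chem(a, b) takes the same value for every pair of distinct models a, b ∈ S. -/

import Mathlib

open Finset

variable {M : Type*}

/-- The benefit of model `a` relative to a set `Y`: cost drop from adding `a`. -/
noncomputable def benefit [DecidableEq M] (c : Finset M → ℝ) (a : M) (Y : Finset M) : ℝ :=
  c Y - c (insert a Y)

/-- Interaction score of `a` against `b` on background set `X`. -/
noncomputable def dscore [DecidableEq M] (c : Finset M → ℝ) (a b : M) (X : Finset M) : ℝ :=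
  |benefit c a X - benefit c a (insert b X)| / c (insert a (insert b X))

/-- The chemistry of the pair `{a, b}` over the model pool `S`. -/
noncomputable def chem [DecidableEq M] (c : Finset M → ℝ) (S : Finset M) (a b : M) : ℝ :=
  ((S \ {a, b}).powerset).sup' (Finset.powerset_nonempty _)
    (fun X => max (dscore c a b X) (dscore c b a X))

/-!
A cardinality-only cost makes the interaction score `d(a, b, X)` a function of `|X|` alone, namely
`|g k - 2 g (k+1) + g (k+2)| / g (k+2)` with `k = |X|`, and the background sets `X ⊆ S \ {a, b}`
realise every size `k ≤ |S| - 2`. So `chem(a, b)` is the maximum of this function over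
`k ≤ |S| - 2`, whatever the pair.
-/

theorem Finset.image_card_powerset {α : Type*} (s : Finset α) :
    s.powerset.image card = range (s.card + 1) := by
  ext n
  simp only [mem_image, mem_powerset, mem_range, Nat.lt_succ_iff]
  constructor
  · rintro ⟨X, hX, rfl⟩
    exact card_le_card hX
  · exact exists_subset_card_eq

theorem Finset.sup'_powerset_comp_card {α β : Type*} [SemilatticeSup β] (s : Finset α)
    (h : ℕ → β) :
    s.powerset.sup' (powerset_nonempty s) (fun X => h X.card) =
      (range (s.card + 1)).sup' nonempty_range_add_one h := by
  classical
  simp only [← image_card_powerset, sup'_image, Function.comp_def]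

noncomputable def cardDScore (g : ℕ → ℝ) (k : ℕ) : ℝ :=
  |(g k - g (k + 1)) - (g (k + 1) - g (k + 2))| / g (k + 2)

section CardinalityCost

variable [DecidableEq M] {S : Finset M} {c : Finset M → ℝ} {g : ℕ → ℝ}

theorem dscore_eq_cardDScore (hcard : ∀ Y ⊆ S, c Y = g Y.card) {a b : M} (ha : a ∈ S)
    (hb : b ∈ S) (hab : a ≠ b) {X : Finset M} (hX : X ⊆ S \ {a, b}) :
    dscore c a b X = cardDScore g X.card := by
  have hXS : X ⊆ S := hX.trans sdiff_subset
  have haX : a ∉ X := fun h => (mem_sdiff.mp (hX h)).2 (by simp)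
  have hbX : b ∉ X := fun h => (mem_sdiff.mp (hX h)).2 (by simp)
  have hbXS : insert b X ⊆ S := insert_subset hb hXS
  have hbXcard : (insert b X).card = X.card + 1 := card_insert_of_notMem hbX
  have habXcard : (insert a (insert b X)).card = X.card + 2 := by
    rw [card_insert_of_notMem (by simp [hab, haX]), hbXcard]
  simp only [dscore, benefit, hcard X hXS, hcard _ hbXS, hcard _ (insert_subset ha hXS),
    hcard _ (insert_subset ha hbXS), card_insert_of_notMem haX, hbXcard, habXcard, cardDScore]

theorem chem_eq_sup'_cardDScore (hcard : ∀ Y ⊆ S, c Y = g Y.card) {a b : M} (ha : a ∈ S)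
    (hb : b ∈ S) (hab : a ≠ b) :
    chem c S a b = (range (S.card - 2 + 1)).sup' nonempty_range_add_one (cardDScore g) := by
  have hpair : ({a, b} : Finset M).card = 2 := card_pair hab
  rw [← hpair, ← card_sdiff_of_subset (insert_subset ha (singleton_subset_iff.mpr hb)),
    ← sup'_powerset_comp_card]
  refine sup'_congr _ rfl fun X hX => ?_
  have hX : X ⊆ S \ {a, b} := mem_powerset.mp hX
  have hX' : X ⊆ S \ {b, a} := pair_comm a b ▸ hX
  rw [dscore_eq_cardDScore hcard ha hb hab hX, dscore_eq_cardDScore hcard hb ha hab.symm hX',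
    max_self]

end CardinalityCost

theorem chem_const_of_card_invariant_general [DecidableEq M] (S : Finset M) (c : Finset M → ℝ)
    (g : ℕ → ℝ) (hcard : ∀ Y ⊆ S, c Y = g Y.card) :
    ∀ a ∈ S, ∀ b ∈ S, a ≠ b → ∀ a' ∈ S, ∀ b' ∈ S, a' ≠ b' →
      chem c S a b = chem c S a' b' := by
  intro a ha b hb hab a' ha' b' hb' hab'
  rw [chem_eq_sup'_cardDScore hcard ha hb hab, chem_eq_sup'_cardDScore hcard ha' hb' hab']

/-- If the cost depends only on cardinality (equivalently, is invariant under
all permutations of models fixing `S` setwise), then chemistry takes the same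
value on every pair of distinct models of `S`. -/
theorem chem_const_of_card_invariant [DecidableEq M] (S : Finset M) (c : Finset M → ℝ)
    (hc : ∀ Y ⊆ S, Y.Nonempty → 0 < c Y)
    (g : ℕ → ℝ) (hcard : ∀ Y ⊆ S, c Y = g Y.card) :
    ∀ a ∈ S, ∀ b ∈ S, a ≠ b → ∀ a' ∈ S, ∀ b' ∈ S, a' ≠ b' →
      chem c S a b = chem c S a' b' :=
  chem_const_of_card_invariant_general S c g hcard
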